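/- Let n, p ≥ 1, let Σ be an n×n real diagonal matrix with strictly positive diagonal entries, and let A_1,…,A_p be real n×n matrices. Define A(z) = I − Σ_{k=1}^p A_k z^k (a complex-matrix-valued polynomial, viewing the real matrices as complex), the inverse spectral density G(ω) = A(e^{iω})ᴴ Σ⁻¹ A(e^{iω}) for ω ∈ ℝ, and the matrices W_0 = −Σ⁻¹ + Σ_{l=1}^p A_lᵀ Σ⁻¹ A_l and W_k = −2Σ⁻¹A_k + 2 Σ_{l=1}^{p−k} A_lᵀ Σ⁻¹ A_{l+k} for k = 1,…,p. Then for any indices i ≠ j, the (i,j) entry of G(ω) is zero for every ω ∈ ℝ if and only if (W_k)_{ij} = 0 and (W_k)_{ji} = 0 for all k = 0,1,…,p. -/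

import Mathlib

/-!
On the unit circle `conj z = z⁻¹`, so writing `A(z) = ∑_{k ≤ p} B_k z^k` (`B_0 = I`,
`B_k = -A_k`), every entry `G(ω)ᵢⱼ` is a trigonometric polynomial `∑_{|t| ≤ p} c_t e^{itω}` with
`c_t = (Γ_t)ᵢⱼ` and `c_{-t} = (Γ_t)ⱼᵢ`, where `Γ_t = ∑_k B_kᵀ Σ⁻¹ B_{k+t}` (using `Σ⁻¹` symmetric).
The characters `ω ↦ e^{itω}` are linearly independent (Dedekind), so `G(ω)ᵢⱼ ≡ 0` iff all these
coefficients vanish. Finally `W_k = 2 Γ_k` for `k ≥ 1`, and `W_0 = Γ_0 - 2 Σ⁻¹` agrees with `Γ_0`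
off the diagonal.
-/

open Matrix Finset Complex

lemma sum_range_succ_eq_add_sum_Icc_one {M : Type*} [AddCommMonoid M] (n : ℕ) (f : ℕ → M) :
    ∑ k ∈ range (n + 1), f k = f 0 + ∑ k ∈ Icc 1 n, f k := by
  rw [sum_range_succ', add_comm, ← Ico_add_one_right_eq_Icc, range_eq_Ico, sum_Ico_add' f 0 n 1]

lemma sum_filter_sub_eq_natCast {M : Type*} [AddCommMonoid M] (N t : ℕ) (f : ℕ → ℕ → M) :
    ∑ x ∈ range N ×ˢ range N with (x.2 : ℤ) - x.1 = t, f x.1 x.2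
      = ∑ k ∈ range (N - t), f k (k + t) := by
  refine sum_nbij' (fun x => x.1) (fun k => (k, k + t)) ?_ ?_ ?_ ?_ ?_ <;>
    simp only [mem_filter, mem_product, mem_range, Prod.forall, Prod.mk.injEq, true_and,
      implies_true]
  · omega
  · omega
  · omega
  · rintro a b ⟨-, hab⟩
    rw [show b = a + t by omega]

lemma sum_filter_sub_eq_neg_natCast {M : Type*} [AddCommMonoid M] (N t : ℕ) (f : ℕ → ℕ → M) :
    ∑ x ∈ range N ×ˢ range N with (x.2 : ℤ) - x.1 = -t, f x.1 x.2
      = ∑ k ∈ range (N - t), f (k + t) k := by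
  refine sum_nbij' (fun x => x.2) (fun k => (k + t, k)) ?_ ?_ ?_ ?_ ?_ <;>
    simp only [mem_filter, mem_product, mem_range, Prod.forall, Prod.mk.injEq, and_true,
      implies_true]
  · omega
  · omega
  · omega
  · rintro a b ⟨-, hab⟩
    rw [show a = b + t by omega]

noncomputable def expIntMulIHom (t : ℤ) : Multiplicative ℝ →* ℂ where
  toFun ω := exp (t * ω.toAdd * I)
  map_one' := by simp
  map_mul' a b := by simp only [toAdd_mul, ofReal_add, ← Complex.exp_add]; ring_nf

lemma eq_of_exp_int_mul_I_eq {t s : ℤ} (h : ∀ ω : ℝ, exp (t * ω * I) = exp (s * ω * I)) :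
    t = s := by
  by_contra hne
  have hts : (t : ℂ) - s ≠ 0 := by exact_mod_cast sub_ne_zero.2 hne
  set ω : ℝ := Real.pi / (t - s)
  have hdiff : (t : ℂ) * ω * I - s * ω * I = Real.pi * I := by
    simp only [ω]; push_cast; field_simp
  have h1 := congrArg (· / exp (s * ω * I)) (h ω)
  simp only [← Complex.exp_sub, hdiff, exp_pi_mul_I, sub_self, Complex.exp_zero] at h1
  norm_num at h1

lemma linearIndependent_exp_int_mul_I :
    LinearIndependent ℂ (fun (t : ℤ) (ω : ℝ) => exp (t * ω * I)) :=
  (linearIndependent_monoidHom (Multiplicative ℝ) ℂ).comp expIntMulIHom fun _ _ h =>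
    eq_of_exp_int_mul_I_eq fun ω => DFunLike.congr_fun h (Multiplicative.ofAdd ω)

/-- A trigonometric polynomial vanishes identically iff all its Fourier coefficients
(here: the sums of `g` over the fibres of `φ`) vanish. -/
theorem forall_sum_mul_exp_eq_zero_iff {α : Type*} (s : Finset α) (φ : α → ℤ) (g : α → ℂ) :
    (∀ ω : ℝ, ∑ x ∈ s, g x * exp (φ x * ω * I) = 0) ↔ ∀ t : ℤ, ∑ x ∈ s with φ x = t, g x = 0 := by
  classical
  have hfiber : ∀ ω : ℝ, ∑ x ∈ s, g x * exp (φ x * ω * I)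
      = ∑ t ∈ s.image φ, (∑ x ∈ s with φ x = t, g x) * exp (t * ω * I) := by
    intro ω
    rw [← sum_fiberwise_of_maps_to fun x hx => mem_image_of_mem φ hx]
    refine sum_congr rfl fun t _ => ?_
    rw [sum_mul]
    exact sum_congr rfl fun x hx => by rw [(mem_filter.1 hx).2]
  constructor
  · intro h t
    by_cases ht : t ∈ s.image φ
    · refine linearIndependent_iff'.1 linearIndependent_exp_int_mul_I (s.image φ)
        (fun t => ∑ x ∈ s with φ x = t, g x) (funext fun ω => ?_) t ht
      simpa [hfiber] using h ω
    · refine sum_eq_zero fun x hx => absurd ?_ ht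
      rw [← (mem_filter.1 hx).2]
      exact mem_image_of_mem φ (mem_filter.1 hx).1
  · intro h ω
    simp [hfiber, h]

lemma star_exp_mul_I_pow_mul_pow (ω : ℝ) (k l : ℕ) :
    star (exp (I * ω)) ^ k * exp (I * ω) ^ l = exp ((((l : ℤ) - k : ℤ) : ℂ) * ω * I) := by
  rw [RCLike.star_def, ← Complex.exp_conj, ← Complex.exp_nat_mul, ← Complex.exp_nat_mul,
    ← Complex.exp_add]
  congr 1
  simp only [map_mul, conj_I, conj_ofReal]
  push_cast
  ring

lemma conjTranspose_map_ofReal {m n : Type*} (M : Matrix m n ℝ) :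
    (M.map ofReal)ᴴ = Mᵀ.map ofReal := by
  ext a b; simp

lemma map_ofReal_mul {m n o : Type*} [Fintype n] (M : Matrix m n ℝ) (N : Matrix n o ℝ) :
    (M * N).map ofReal = M.map ofReal * N.map ofReal :=
  Matrix.map_mul (f := ofRealHom)

lemma transpose_mul_mul_apply_of_transpose_eq {ι R : Type*} [Fintype ι] [CommRing R]
    {D : Matrix ι ι R} (hD : Dᵀ = D) (X Y : Matrix ι ι R) (a b : ι) :
    (Xᵀ * D * Y) a b = (Yᵀ * D * X) b a := by
  rw [← transpose_apply (_ * _ * _), transpose_mul, transpose_mul, transpose_transpose, hD,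
    Matrix.mul_assoc]

section Autocorrelation

variable {ι R : Type*} [Fintype ι] [CommRing R]

def arPolyCoeff [DecidableEq ι] (A : ℕ → Matrix ι ι R) (k : ℕ) : Matrix ι ι R :=
  if k = 0 then 1 else -A k

/-- The `t`-th Fourier coefficient of `B(z)ᴴ D B(z)`, `B(z) = ∑_{k<N} B_k z^k`, on the unit
circle. -/
def weightedAutocorr (B : ℕ → Matrix ι ι R) (D : Matrix ι ι R) (N t : ℕ) : Matrix ι ι R :=
  ∑ k ∈ range (N - t), (B k)ᵀ * D * B (k + t)

variable (B : ℕ → Matrix ι ι R) (A : ℕ → Matrix ι ι R) (D : Matrix ι ι R)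

lemma weightedAutocorr_of_le {N t : ℕ} (h : N ≤ t) : weightedAutocorr B D N t = 0 := by
  simp [weightedAutocorr, Nat.sub_eq_zero_of_le h]

lemma weightedAutocorr_arPolyCoeff_zero [DecidableEq ι] (p : ℕ) :
    weightedAutocorr (arPolyCoeff A) D (p + 1) 0 = D + ∑ l ∈ Icc 1 p, (A l)ᵀ * D * A l := by
  rw [weightedAutocorr, Nat.sub_zero, sum_range_succ_eq_add_sum_Icc_one]
  congr 1
  · simp [arPolyCoeff]
  · refine sum_congr rfl fun l hl => ?_
    simp [arPolyCoeff, Nat.one_le_iff_ne_zero.1 (mem_Icc.1 hl).1]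

lemma two_smul_weightedAutocorr_arPolyCoeff [DecidableEq ι] {p t : ℕ} (ht : 0 < t)
    (htp : t ≤ p) :
    (2 : R) • weightedAutocorr (arPolyCoeff A) D (p + 1) t
      = (-2 : R) • (D * A t) + (2 : R) • ∑ l ∈ Icc 1 (p - t), (A l)ᵀ * D * A (l + t) := by
  rw [weightedAutocorr, show p + 1 - t = p - t + 1 by omega, sum_range_succ_eq_add_sum_Icc_one,
    neg_smul, ← smul_neg, ← smul_add]
  congr 2
  · simp [arPolyCoeff, ht.ne']
  · refine sum_congr rfl fun l hl => ?_
    simp [arPolyCoeff, Nat.one_le_iff_ne_zero.1 (mem_Icc.1 hl).1]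

lemma sum_filter_eq_weightedAutocorr_apply (N t : ℕ) (a b : ι) :
    ∑ x ∈ range N ×ˢ range N with (x.2 : ℤ) - x.1 = t, ((B x.1)ᵀ * D * B x.2) a b
      = weightedAutocorr B D N t a b := by
  rw [sum_filter_sub_eq_natCast N t fun k l => ((B k)ᵀ * D * B l) a b, weightedAutocorr,
    Matrix.sum_apply]

lemma sum_filter_eq_weightedAutocorr_apply_swap {D : Matrix ι ι R} (hD : Dᵀ = D) (N t : ℕ)
    (a b : ι) :
    ∑ x ∈ range N ×ˢ range N with (x.2 : ℤ) - x.1 = -t, ((B x.1)ᵀ * D * B x.2) a b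
      = weightedAutocorr B D N t b a := by
  rw [sum_filter_sub_eq_neg_natCast N t fun k l => ((B k)ᵀ * D * B l) a b, weightedAutocorr,
    Matrix.sum_apply]
  exact sum_congr rfl fun k _ => transpose_mul_mul_apply_of_transpose_eq hD _ _ a b

lemma forall_sum_filter_eq_zero_iff {D : Matrix ι ι R} (hD : Dᵀ = D) (N : ℕ) (a b : ι) :
    (∀ t : ℤ, ∑ x ∈ range N ×ˢ range N with (x.2 : ℤ) - x.1 = t, ((B x.1)ᵀ * D * B x.2) a b = 0)
      ↔ ∀ t < N, weightedAutocorr B D N t a b = 0 ∧ weightedAutocorr B D N t b a = 0 := by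
  refine ⟨fun h t _ => ?_, fun h t => ?_⟩
  · rw [← sum_filter_eq_weightedAutocorr_apply, ← sum_filter_eq_weightedAutocorr_apply_swap B hD]
    exact ⟨h t, h (-t)⟩
  obtain ⟨t, rfl | rfl⟩ := Int.eq_nat_or_neg t
  · rw [sum_filter_eq_weightedAutocorr_apply]
    rcases lt_or_ge t N with ht | ht
    · exact (h t ht).1
    · rw [weightedAutocorr_of_le B D ht, Matrix.zero_apply]
  · rw [sum_filter_eq_weightedAutocorr_apply_swap B hD]
    rcases lt_or_ge t N with ht | ht
    · exact (h t ht).2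
    · rw [weightedAutocorr_of_le B D ht, Matrix.zero_apply]

end Autocorrelation

lemma one_sub_sum_eq_sum_arPolyCoeff {ι : Type*} [Fintype ι] [DecidableEq ι]
    (A : ℕ → Matrix ι ι ℝ) (p : ℕ) (z : ℂ) :
    1 - ∑ k ∈ Icc 1 p, z ^ k • (A k).map ofReal
      = ∑ k ∈ range (p + 1), z ^ k • (arPolyCoeff A k).map ofReal := by
  rw [sum_range_succ_eq_add_sum_Icc_one, sub_eq_add_neg, ← sum_neg_distrib]
  congr 1
  · simp [arPolyCoeff]
  · refine sum_congr rfl fun k hk => ?_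
    rw [arPolyCoeff, if_neg (Nat.one_le_iff_ne_zero.1 (mem_Icc.1 hk).1),
      Matrix.map_neg _ ofReal_neg, smul_neg]

lemma conjTranspose_sum_mul_mul_sum {ι : Type*} [Fintype ι] (z : ℂ) (s : Finset ℕ)
    (B : ℕ → Matrix ι ι ℝ) (D : Matrix ι ι ℝ) :
    (∑ k ∈ s, z ^ k • (B k).map ofReal)ᴴ * D.map ofReal * ∑ l ∈ s, z ^ l • (B l).map ofReal
      = ∑ k ∈ s, ∑ l ∈ s, (star z ^ k * z ^ l) • ((B k)ᵀ * D * B l).map ofReal := by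
  simp only [conjTranspose_sum, conjTranspose_smul, conjTranspose_map_ofReal, Matrix.sum_mul,
    Matrix.mul_sum, map_ofReal_mul, Matrix.smul_mul, Matrix.mul_smul, star_pow, smul_sum,
    smul_smul]
  rw [sum_comm]
  exact sum_congr rfl fun k _ => sum_congr rfl fun l _ => by rw [mul_comm]

lemma arPoly_conjTranspose_mul_mul_apply {ι : Type*} [Fintype ι] [DecidableEq ι]
    (A : ℕ → Matrix ι ι ℝ) (D : Matrix ι ι ℝ) (p : ℕ) (ω : ℝ) (a b : ι) :
    ((1 - ∑ k ∈ Icc 1 p, exp (I * ω) ^ k • (A k).map ofReal)ᴴ * D.map ofReal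
        * (1 - ∑ k ∈ Icc 1 p, exp (I * ω) ^ k • (A k).map ofReal) : Matrix ι ι ℂ) a b
      = ∑ x ∈ range (p + 1) ×ˢ range (p + 1),
          ((((arPolyCoeff A x.1)ᵀ * D * arPolyCoeff A x.2) a b : ℝ) : ℂ)
            * exp ((((x.2 : ℤ) - x.1 : ℤ) : ℂ) * ω * I) := by
  rw [one_sub_sum_eq_sum_arPolyCoeff, conjTranspose_sum_mul_mul_sum, ← sum_product',
    Matrix.sum_apply]
  refine sum_congr rfl fun x _ => ?_
  rw [Matrix.smul_apply, map_apply, smul_eq_mul, mul_comm, star_exp_mul_I_pow_mul_pow]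

theorem stmt_0_general (n p : ℕ)
    (d : Fin n → ℝ)
    (A : ℕ → Matrix (Fin n) (Fin n) ℝ)
    (G : ℝ → Matrix (Fin n) (Fin n) ℂ)
    (hG : ∀ ω : ℝ,
      G ω =
        (1 - ∑ k ∈ Finset.Icc 1 p,
            Complex.exp (Complex.I * (ω : ℂ)) ^ k • (A k).map (Complex.ofReal))ᴴ
          * ((Matrix.diagonal d)⁻¹).map (Complex.ofReal)
          * (1 - ∑ k ∈ Finset.Icc 1 p,
            Complex.exp (Complex.I * (ω : ℂ)) ^ k • (A k).map (Complex.ofReal)))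
    (W : ℕ → Matrix (Fin n) (Fin n) ℝ)
    (hW0 : W 0 = -(Matrix.diagonal d)⁻¹
        + ∑ l ∈ Finset.Icc 1 p, (A l)ᵀ * (Matrix.diagonal d)⁻¹ * A l)
    (hWk : ∀ k, 1 ≤ k → k ≤ p →
      W k = (-2 : ℝ) • ((Matrix.diagonal d)⁻¹ * A k)
        + (2 : ℝ) • ∑ l ∈ Finset.Icc 1 (p - k), (A l)ᵀ * (Matrix.diagonal d)⁻¹ * A (l + k))
    (i j : Fin n) (hij : i ≠ j) :
    (∀ ω : ℝ, G ω i j = 0) ↔ (∀ k ≤ p, W k i j = 0 ∧ W k j i = 0) := by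
  set D := (diagonal d)⁻¹ with hD
  have hD_offdiag : ∀ a b, a ≠ b → D a b = 0 := fun a b hab => by
    rw [hD, inv_diagonal]; exact diagonal_apply_ne _ hab
  have hD_symm : Dᵀ = D := by rw [hD, inv_diagonal, diagonal_transpose]
  have hW : ∀ k ≤ p, ∀ a b, a ≠ b →
      (weightedAutocorr (arPolyCoeff A) D (p + 1) k a b = 0 ↔ W k a b = 0) := by
    intro k hk a b hab
    rcases Nat.eq_zero_or_pos k with rfl | hk0
    · simp [hW0, weightedAutocorr_arPolyCoeff_zero, hD_offdiag a b hab]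
    · rw [hWk k hk0 hk, ← two_smul_weightedAutocorr_arPolyCoeff A D hk0 hk]
      simp
  simp_rw [hG, arPoly_conjTranspose_mul_mul_apply, forall_sum_mul_exp_eq_zero_iff, ← ofReal_sum,
    ofReal_eq_zero, forall_sum_filter_eq_zero_iff _ hD_symm, Nat.lt_succ_iff]
  exact forall₂_congr fun k hk => and_congr (hW k hk i j hij) (hW k hk j i hij.symm)

/-- Partial-correlation constraints of a vector AR(p) process: for `i ≠ j`, the `(i,j)` entry of
the inverse spectral density `G(ω) = A(e^{iω})ᴴ Σ⁻¹ A(e^{iω})` vanishes for all `ω` iff the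
`(i,j)` and `(j,i)` entries of the matrices `W_0, …, W_p` vanish. -/
theorem stmt_0 (n p : ℕ) (hn : 1 ≤ n) (hp : 1 ≤ p)
    (d : Fin n → ℝ) (hd : ∀ i, 0 < d i)
    (A : ℕ → Matrix (Fin n) (Fin n) ℝ)
    (G : ℝ → Matrix (Fin n) (Fin n) ℂ)
    (hG : ∀ ω : ℝ,
      G ω =
        (1 - ∑ k ∈ Finset.Icc 1 p,
            Complex.exp (Complex.I * (ω : ℂ)) ^ k • (A k).map (Complex.ofReal))ᴴ
          * ((Matrix.diagonal d)⁻¹).map (Complex.ofReal)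
          * (1 - ∑ k ∈ Finset.Icc 1 p,
            Complex.exp (Complex.I * (ω : ℂ)) ^ k • (A k).map (Complex.ofReal)))
    (W : ℕ → Matrix (Fin n) (Fin n) ℝ)
    (hW0 : W 0 = -(Matrix.diagonal d)⁻¹
        + ∑ l ∈ Finset.Icc 1 p, (A l)ᵀ * (Matrix.diagonal d)⁻¹ * A l)
    (hWk : ∀ k, 1 ≤ k → k ≤ p →
      W k = (-2 : ℝ) • ((Matrix.diagonal d)⁻¹ * A k)
        + (2 : ℝ) • ∑ l ∈ Finset.Icc 1 (p - k), (A l)ᵀ * (Matrix.diagonal d)⁻¹ * A (l + k))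
    (i j : Fin n) (hij : i ≠ j) :
    (∀ ω : ℝ, G ω i j = 0) ↔ (∀ k ≤ p, W k i j = 0 ∧ W k j i = 0) :=
  stmt_0_general n p d A G hG W hW0 hWk i j hij
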